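/- arXiv:1308.2349 — 4 statements merged into one kernel-verified Lean document; each statement's English description precedes it below -/
import Mathlib

section
/- For every n-PDS CP=(P_1,...,P_n) communicating via a finite set Locks, all indices 1 <= i, j <= n with i != j, and all control states q_i of P_i and q_j of P_j: Reach(CP, q_i, q_j) holds if and only if Reach(CP_{i,j}, q_i, q_j) holds, where CP_{i,j} denotes the 2-PDS (P_i, P_j) communicating via Locks. -/
/-- Transition labels of a pushdown system using locks. -/
inductive Label (L : Type) : Type where
  | state : Label L
  | push : Label L
  | pop : Label L
  | acq : L → Label L
  | rel : L → Label L

/-- A pushdown system (PDS) using the set of locks `L`, with control states `Q`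
and stack alphabet `Γ`. -/
structure PDS (Q Γ L : Type) where
  start : Q
  stateTr : Set (Q × Q)
  pushTr : Set (Q × (Q × Γ))
  popTr : Set ((Q × Γ) × Q)
  acqTr : Set (Q × (Q × L))
  relTr : Set ((Q × L) × Q)

/-- A local configuration of one thread: control state, stack and held locks. -/
abbrev LConf (Q Γ L : Type) : Type := Q × List Γ × Set L

/-- One labelled step of a single thread, in an environment where the locks in
`free` are free (held by no thread). -/
def PDS.LStep {Q Γ L : Type} (P : PDS Q Γ L) (free : Set L) (c : LConf Q Γ L) :
    Label L → LConf Q Γ L → Prop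
  | .state, c' => (c.1, c'.1) ∈ P.stateTr ∧ c'.2.1 = c.2.1 ∧ c'.2.2 = c.2.2
  | .push, c' => ∃ a, (c.1, (c'.1, a)) ∈ P.pushTr ∧ c'.2.1 = c.2.1 ++ [a] ∧ c'.2.2 = c.2.2
  | .pop, c' => ∃ a, ((c.1, a), c'.1) ∈ P.popTr ∧ c.2.1 = c'.2.1 ++ [a] ∧ c'.2.2 = c.2.2
  | .acq l, c' => (c.1, (c'.1, l)) ∈ P.acqTr ∧ l ∈ free ∧ c'.2.1 = c.2.1 ∧ c'.2.2 = c.2.2 ∪ {l}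
  | .rel l, c' => ((c.1, l), c'.1) ∈ P.relTr ∧ l ∈ c.2.2 ∧ c'.2.1 = c.2.1 ∧ c'.2.2 = c.2.2 \ {l}

/-- A configuration of an `n`-PDS: a local configuration for each thread. -/
abbrev NConf (n : ℕ) (Q Γ L : Type) : Type := Fin n → LConf Q Γ L

/-- The labelled transition relation of an `n`-PDS `P : Fin n → PDS Q Γ L`: in a step
labelled `(λ, i)` only the `i`-th component changes, and the free locks are those held
by no thread. -/
def NStep {n : ℕ} {Q Γ L : Type} (P : Fin n → PDS Q Γ L) (s : NConf n Q Γ L)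
    (lab : Label L × Fin n) (t : NConf n Q Γ L) : Prop :=
  (∀ j, j ≠ lab.2 → t j = s j) ∧
  (P lab.2).LStep {l | ∀ j, l ∉ (s j).2.2} (s lab.2) lab.1 (t lab.2)

/-- The initial configuration of an `n`-PDS. -/
def NInit {n : ℕ} {Q Γ L : Type} (P : Fin n → PDS Q Γ L) : NConf n Q Γ L :=
  fun i => ((P i).start, [], ∅)

/-- A (finite) computation `s 0 → s 1 → ⋯ → s len` of an `n`-PDS, starting from the
initial configuration; the transition from `s k` to `s (k+1)` has label `lab k`. -/
structure NComp {n : ℕ} {Q Γ L : Type} (P : Fin n → PDS Q Γ L) where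
  len : ℕ
  s : ℕ → NConf n Q Γ L
  lab : ℕ → Label L × Fin n
  init : s 0 = NInit P
  step : ∀ k < len, NStep P (s k) (lab k) (s (k + 1))

/-- `NReach P i j qi qj`: some computation of the `n`-PDS `P` ends in a configuration
whose `i`-th control state is `qi` and whose `j`-th control state is `qj`. -/
def NReach {n : ℕ} {Q Γ L : Type} (P : Fin n → PDS Q Γ L) (i j : Fin n)
    (qi qj : Q) : Prop :=
  ∃ c : NComp P, (c.s c.len i).1 = qi ∧ (c.s c.len j).1 = qj

/-!
Projecting a computation onto a set of threads gives a computation of the corresponding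
subsystem: steps of the other threads become stutters, and fewer threads hold fewer locks, so
every acquisition stays enabled. Conversely, a computation of the subsystem runs unchanged in the
whole system while the other threads idle in their initial configurations, holding no locks.
-/

open Function Relation

theorem PDS.LStep.mono {Q Γ L : Type} {P : PDS Q Γ L} {f f' : Set L} (hf : f ⊆ f')
    {c c' : LConf Q Γ L} {lab : Label L} (h : P.LStep f c lab c') :
    P.LStep f' c lab c' := by
  cases lab with
  | acq l => exact ⟨h.1, hf h.2.1, h.2.2⟩
  | _ => exact h

section Computations

variable {n : ℕ} {Q Γ L : Type} {P : Fin n → PDS Q Γ L}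

def NMove (P : Fin n → PDS Q Γ L) (s t : NConf n Q Γ L) : Prop :=
  ∃ lab, NStep P s lab t

/-- Labels carry a thread index, so for `n = 0` there is no computation at all. -/
def NComp.nil [NeZero n] (P : Fin n → PDS Q Γ L) : NComp P where
  len := 0
  s := fun _ => NInit P
  lab := fun _ => (.state, 0)
  init := rfl
  step := fun _ h => absurd h (Nat.not_lt_zero _)

def NComp.snoc (c : NComp P) (lab : Label L × Fin n) (t : NConf n Q Γ L)
    (h : NStep P (c.s c.len) lab t) : NComp P where
  len := c.len + 1
  s := fun k => if k ≤ c.len then c.s k else t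
  lab := fun k => if k < c.len then c.lab k else lab
  init := by simp [c.init]
  step := by
    intro k hk
    rcases Nat.lt_succ_iff_lt_or_eq.mp hk with hlt | rfl
    · simpa [hlt.le, hlt, Nat.succ_le_of_lt hlt] using c.step k hlt
    · simpa using h

theorem NComp.snoc_s_len (c : NComp P) (lab : Label L × Fin n) (t : NConf n Q Γ L)
    (h : NStep P (c.s c.len) lab t) : (c.snoc lab t h).s (c.snoc lab t h).len = t := by
  simp [NComp.snoc]

theorem NComp.reflTransGen_nMove (c : NComp P) {k : ℕ} (hk : k ≤ c.len) :
    ReflTransGen (NMove P) (NInit P) (c.s k) := by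
  induction k with
  | zero => rw [c.init]
  | succ k ih => exact (ih (Nat.le_of_succ_le hk)).tail ⟨c.lab k, c.step k hk⟩

theorem exists_nComp_of_reflTransGen [NeZero n] {s : NConf n Q Γ L}
    (h : ReflTransGen (NMove P) (NInit P) s) : ∃ c : NComp P, c.s c.len = s := by
  induction h with
  | refl => exact ⟨NComp.nil P, rfl⟩
  | tail _ hst ih =>
    obtain ⟨c, rfl⟩ := ih
    obtain ⟨lab, hstep⟩ := hst
    exact ⟨c.snoc lab _ hstep, c.snoc_s_len lab _ hstep⟩

theorem nReach_iff_exists_reflTransGen (i j : Fin n) (qi qj : Q) :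
    NReach P i j qi qj ↔
      ∃ s, ReflTransGen (NMove P) (NInit P) s ∧ (s i).1 = qi ∧ (s j).1 = qj := by
  have : NeZero n := NeZero.of_pos i.pos
  constructor
  · rintro ⟨c, hi, hj⟩
    exact ⟨_, c.reflTransGen_nMove le_rfl, hi, hj⟩
  · rintro ⟨s, hs, hi, hj⟩
    obtain ⟨c, rfl⟩ := exists_nComp_of_reflTransGen hs
    exact ⟨c, hi, hj⟩

end Computations

section Subsystem

variable {m n : ℕ} {Q Γ L : Type} {P : Fin n → PDS Q Γ L} {e : Fin m → Fin n}

theorem NStep.comp (he : Injective e) {s t : NConf n Q Γ L} {lab : Label L} {a : Fin m}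
    (h : NStep P s (lab, e a) t) : NStep (P ∘ e) (s ∘ e) (lab, a) (t ∘ e) :=
  ⟨fun b hb => h.1 (e b) (he.ne hb), by
    refine h.2.mono ?_
    exact fun _ hl b => hl (e b)⟩

theorem NStep.comp_eq_of_notMem_range {s t : NConf n Q Γ L} {lab : Label L × Fin n}
    (h : NStep P s lab t) (hk : lab.2 ∉ Set.range e) : t ∘ e = s ∘ e :=
  funext fun a => h.1 (e a) fun hak => hk ⟨a, hak⟩

theorem NMove.reflTransGen_comp (he : Injective e) {s t : NConf n Q Γ L}
    (h : NMove P s t) : ReflTransGen (NMove (P ∘ e)) (s ∘ e) (t ∘ e) := by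
  obtain ⟨⟨lab, k⟩, h⟩ := h
  by_cases hk : k ∈ Set.range e
  · obtain ⟨a, rfl⟩ := hk
    exact .single ⟨(lab, a), h.comp he⟩
  · rw [h.comp_eq_of_notMem_range hk]

theorem reflTransGen_nMove_comp (he : Injective e) {s : NConf n Q Γ L}
    (h : ReflTransGen (NMove P) (NInit P) s) :
    ReflTransGen (NMove (P ∘ e)) (NInit (P ∘ e)) (s ∘ e) :=
  h.lift' (· ∘ e) fun _ _ => NMove.reflTransGen_comp he

theorem NStep.extend (he : Injective e) {x y : NConf m Q Γ L} {lab : Label L} {a : Fin m}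
    (h : NStep (P ∘ e) x (lab, a) y) :
    NStep P (extend e x (NInit P)) (lab, e a) (extend e y (NInit P)) := by
  refine ⟨fun k hk => ?_, ?_⟩
  · by_cases hke : ∃ b, e b = k
    · obtain ⟨b, rfl⟩ := hke
      rw [he.extend_apply, he.extend_apply]
      exact h.1 b fun hb => hk (congrArg e hb)
    · rw [extend_apply' _ _ _ hke, extend_apply' _ _ _ hke]
  · simp only [he.extend_apply]
    refine h.2.mono fun l hl k => ?_
    by_cases hke : ∃ b, e b = k
    · obtain ⟨b, rfl⟩ := hke
      rw [he.extend_apply]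
      exact hl b
    · rw [extend_apply' _ _ _ hke]
      exact Set.notMem_empty l

theorem extend_nInit (he : Injective e) : extend e (NInit (P ∘ e)) (NInit P) = NInit P := by
  funext k
  by_cases hke : ∃ b, e b = k
  · obtain ⟨b, rfl⟩ := hke
    exact he.extend_apply _ _ b
  · exact extend_apply' _ _ _ hke

theorem reflTransGen_nMove_extend (he : Injective e) {x : NConf m Q Γ L}
    (h : ReflTransGen (NMove (P ∘ e)) (NInit (P ∘ e)) x) :
    ReflTransGen (NMove P) (NInit P) (extend e x (NInit P)) := by
  have := h.lift (p := NMove P) (extend e · (NInit P))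
    fun _ _ ⟨_, hxy⟩ => ⟨_, hxy.extend he⟩
  rwa [onFun, extend_nInit he] at this

theorem nReach_comp_iff (he : Injective e) (a b : Fin m) (qa qb : Q) :
    NReach (P ∘ e) a b qa qb ↔ NReach P (e a) (e b) qa qb := by
  simp only [nReach_iff_exists_reflTransGen]
  constructor
  · rintro ⟨x, hx, rfl, rfl⟩
    exact ⟨_, reflTransGen_nMove_extend he hx, by rw [he.extend_apply], by rw [he.extend_apply]⟩
  · rintro ⟨s, hs, rfl, rfl⟩
    exact ⟨_, reflTransGen_nMove_comp he hs, rfl, rfl⟩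

end Subsystem

theorem reach_iff_reach_pair_general
    {n : ℕ} {Q Γ L : Type}
    (P : Fin n → PDS Q Γ L) (i j : Fin n) (hij : i ≠ j) (qi qj : Q) :
    NReach P i j qi qj ↔ NReach ![P i, P j] 0 1 qi qj := by
  have he : Injective ![i, j] := by
    intro a b hab
    fin_cases a <;> fin_cases b <;> simp_all [eq_comm]
  have hpair : ![P i, P j] = P ∘ ![i, j] := by
    funext a
    fin_cases a <;> rfl
  rw [hpair, nReach_comp_iff he]
  rfl

/-- For every `n`-PDS `P` communicating via a finite set of locks,
indices `i ≠ j`, and control states `qi` of thread `i` and `qj` of thread `j`: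
`Reach(P, qi, qj)` holds iff `Reach((P i, P j), qi, qj)` holds for the 2-PDS
consisting of threads `i` and `j` only. -/
theorem reach_iff_reach_pair
    {n : ℕ} {Q Γ L : Type} [Finite Q] [Finite Γ] [Finite L]
    (P : Fin n → PDS Q Γ L) (i j : Fin n) (hij : i ≠ j) (qi qj : Q) :
    NReach P i j qi qj ↔ NReach ![P i, P j] 0 1 qi qj :=
  reach_iff_reach_pair_general P i j hij qi qj
end

section
/- Let CP=(P_0,P_1) be a 2-PDS communicating via a finite set Locks (with disjoint state sets and stack alphabets) and let P_comb be the combined pushdown system. For every reachable configuration (((q_0,held_0),(q_1,held_1)), w) of P_comb, the configuration ((q_0, w restricted to Gamma_0, held_0), (q_1, w restricted to Gamma_1, held_1)) of CP is reachable by a well-bracketed computation of CP, where w restricted to Gamma_i denotes the subword of w consisting of its letters belonging to Gamma_i. -/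
/-- A 2-PDS communicating via locks `L`. -/
structure TwoPDS (Q₀ Γ₀ Q₁ Γ₁ L : Type) where
  P0 : PDS Q₀ Γ₀ L
  P1 : PDS Q₁ Γ₁ L

namespace TwoPDS

variable {Q₀ Γ₀ Q₁ Γ₁ L : Type}

/-- A configuration of a 2-PDS. -/
abbrev Conf (Q₀ Γ₀ Q₁ Γ₁ L : Type) : Type := LConf Q₀ Γ₀ L × LConf Q₁ Γ₁ L

/-- The locks that are held by no thread. -/
def freeLocks (s : Conf Q₀ Γ₀ Q₁ Γ₁ L) : Set L := {l | l ∉ s.1.2.2 ∧ l ∉ s.2.2.2}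

/-- The labelled transition relation of a 2-PDS: in a step labelled `(λ, i)`
only the `i`-th component changes. -/
def Step (CP : TwoPDS Q₀ Γ₀ Q₁ Γ₁ L) (s : Conf Q₀ Γ₀ Q₁ Γ₁ L) (lab : Label L × Fin 2)
    (t : Conf Q₀ Γ₀ Q₁ Γ₁ L) : Prop :=
  (lab.2 = 0 ∧ CP.P0.LStep (freeLocks s) s.1 lab.1 t.1 ∧ t.2 = s.2) ∨
  (lab.2 = 1 ∧ CP.P1.LStep (freeLocks s) s.2 lab.1 t.2 ∧ t.1 = s.1)

/-- The initial configuration. -/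
def initConf (CP : TwoPDS Q₀ Γ₀ Q₁ Γ₁ L) : Conf Q₀ Γ₀ Q₁ Γ₁ L :=
  ((CP.P0.start, [], ∅), (CP.P1.start, [], ∅))

/-- A (finite) computation `s 0 → s 1 → ⋯ → s len` of a 2-PDS, starting from the
initial configuration; the transition from `s k` to `s (k+1)` has label `lab k`. -/
structure Comp (CP : TwoPDS Q₀ Γ₀ Q₁ Γ₁ L) where
  len : ℕ
  s : ℕ → Conf Q₀ Γ₀ Q₁ Γ₁ L
  lab : ℕ → Label L × Fin 2
  init : s 0 = CP.initConf
  step : ∀ k < len, CP.Step (s k) (lab k) (s (k + 1))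

variable {CP : TwoPDS Q₀ Γ₀ Q₁ Γ₁ L}

/-- Height of the stack of thread `i` in the `k`-th configuration. -/
def Comp.height (c : Comp CP) (i : Fin 2) (k : ℕ) : ℕ :=
  if i = 0 then (c.s k).1.2.1.length else (c.s k).2.2.1.length

/-- The set of locks held by thread `i` in the `k`-th configuration. -/
def Comp.lockset (c : Comp CP) (i : Fin 2) (k : ℕ) : Set L :=
  if i = 0 then (c.s k).1.2.2 else (c.s k).2.2.2

/-- The procedure return of thread `i` at position `j` matches the procedure call of
thread `i` at position `l`. -/
def Comp.Matching (c : Comp CP) (i : Fin 2) (l j : ℕ) : Prop :=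
  l < j ∧ j < c.len ∧ c.lab l = (Label.push, i) ∧ c.lab j = (Label.pop, i) ∧
    c.height i l = c.height i (j + 1) ∧
    ∀ p, l + 1 ≤ p → p ≤ j → c.height i (l + 1) ≤ c.height i p

/-- Thread `i` of the 2-PDS follows contextual locking. -/
def Contextual (CP : TwoPDS Q₀ Γ₀ Q₁ Γ₁ L) (i : Fin 2) : Prop :=
  ∀ c : Comp CP, ∀ l j, c.Matching i l j →
    c.lockset i l = c.lockset i j ∧ ∀ r, l ≤ r → r ≤ j → c.lockset i l ⊆ c.lockset i r

/-- `(l₁, l₂, l₃)` is a witness of non-well-bracketing of the computation `c`. -/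
def Comp.Witness (c : Comp CP) (l₁ l₂ l₃ : ℕ) : Prop :=
  ∃ i : Fin 2, l₁ < l₂ ∧ l₂ < l₃ ∧ l₃ < c.len ∧ c.Matching i l₁ l₃ ∧
    c.lab l₂ = (Label.push, 1 - i) ∧ ∀ j, c.Matching (1 - i) l₂ j → l₃ < j

/-- A computation is well-bracketed if it has no witness of non-well-bracketing. -/
def Comp.WellBracketed (c : Comp CP) : Prop := ∀ l₁ l₂ l₃, ¬ c.Witness l₁ l₂ l₃

/-- `Reach CP p q`: some computation of `CP` ends in a configuration whose control
states are `p` and `q`. -/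
def Reach (CP : TwoPDS Q₀ Γ₀ Q₁ Γ₁ L) (p : Q₀) (q : Q₁) : Prop :=
  ∃ c : Comp CP, (c.s c.len).1.1 = p ∧ (c.s c.len).2.1 = q

end TwoPDS

/-- One step of a single pushdown system viewed as a plain (lock-free) transition
system on pairs (control state, stack); used for the combined PDS, whose lock
alphabet is `Empty` so it has no acquire/release transitions. -/
def PDS.CStep {Q Γ L : Type} (P : PDS Q Γ L) (c c' : Q × List Γ) : Prop :=
  ((c.1, c'.1) ∈ P.stateTr ∧ c'.2 = c.2) ∨
  (∃ a, (c.1, (c'.1, a)) ∈ P.pushTr ∧ c'.2 = c.2 ++ [a]) ∨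
  (∃ a, ((c.1, a), c'.1) ∈ P.popTr ∧ c.2 = c'.2 ++ [a])

/-- A configuration of a single PDS is reachable if some computation starting from
the initial control state with empty stack ends in it. -/
def PDS.Reachable {Q Γ L : Type} (P : PDS Q Γ L) (c : Q × List Γ) : Prop :=
  Relation.ReflTransGen P.CStep (P.start, []) c

namespace TwoPDS

/-- Control states of the combined pushdown system. -/
abbrev CombState (Q₀ Q₁ L : Type) : Type := (Q₀ × Set L) × (Q₁ × Set L)

variable {Q₀ Γ₀ Q₁ Γ₁ L : Type}

/-- The combined pushdown system `P_comb` of a 2-PDS: a single PDS (using no locks)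
whose control states are `(Q₀ × 2^L) × (Q₁ × 2^L)` and whose stack alphabet is the
disjoint union `Γ₀ ⊕ Γ₁`. Internal actions, lock acquisitions and lock releases of
the two threads become internal actions; calls and returns push/pop tagged symbols. -/
def comb (CP : TwoPDS Q₀ Γ₀ Q₁ Γ₁ L) : PDS (CombState Q₀ Q₁ L) (Γ₀ ⊕ Γ₁) Empty where
  start := ((CP.P0.start, ∅), (CP.P1.start, ∅))
  stateTr := { x | match x with
    | (((q₀, h₀), (q₁, h₁)), ((q₀', h₀'), (q₁', h₁'))) =>
      ((q₀, q₀') ∈ CP.P0.stateTr ∧ h₀' = h₀ ∧ q₁' = q₁ ∧ h₁' = h₁) ∨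
      ((q₁, q₁') ∈ CP.P1.stateTr ∧ h₁' = h₁ ∧ q₀' = q₀ ∧ h₀' = h₀) ∨
      (∃ l, (q₀, (q₀', l)) ∈ CP.P0.acqTr ∧ l ∉ h₀ ∪ h₁ ∧ h₀' = h₀ ∪ {l} ∧
        q₁' = q₁ ∧ h₁' = h₁) ∨
      (∃ l, (q₁, (q₁', l)) ∈ CP.P1.acqTr ∧ l ∉ h₀ ∪ h₁ ∧ h₁' = h₁ ∪ {l} ∧
        q₀' = q₀ ∧ h₀' = h₀) ∨
      (∃ l, ((q₀, l), q₀') ∈ CP.P0.relTr ∧ l ∈ h₀ ∧ h₀' = h₀ \ {l} ∧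
        q₁' = q₁ ∧ h₁' = h₁) ∨
      (∃ l, ((q₁, l), q₁') ∈ CP.P1.relTr ∧ l ∈ h₁ ∧ h₁' = h₁ \ {l} ∧
        q₀' = q₀ ∧ h₀' = h₀) }
  pushTr := { x | match x with
    | (((q₀, h₀), (q₁, h₁)), (((q₀', h₀'), (q₁', h₁')), a)) =>
      (∃ b, a = Sum.inl b ∧ (q₀, (q₀', b)) ∈ CP.P0.pushTr ∧ h₀' = h₀ ∧
        q₁' = q₁ ∧ h₁' = h₁) ∨
      (∃ b, a = Sum.inr b ∧ (q₁, (q₁', b)) ∈ CP.P1.pushTr ∧ h₁' = h₁ ∧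
        q₀' = q₀ ∧ h₀' = h₀) }
  popTr := { x | match x with
    | ((((q₀, h₀), (q₁, h₁)), a), ((q₀', h₀'), (q₁', h₁'))) =>
      (∃ b, a = Sum.inl b ∧ ((q₀, b), q₀') ∈ CP.P0.popTr ∧ h₀' = h₀ ∧
        q₁' = q₁ ∧ h₁' = h₁) ∨
      (∃ b, a = Sum.inr b ∧ ((q₁, b), q₁') ∈ CP.P1.popTr ∧ h₁' = h₁ ∧
        q₀' = q₀ ∧ h₀' = h₀) }
  acqTr := ∅
  relTr := ∅

end TwoPDS

/-!
Replay a computation of `P_comb` step by step: each of its steps is a step of one thread of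
`CP` on the projected configuration, so projecting yields a computation of `CP` in which the
two thread stacks are the two subwords of one shared stack. On a single stack no
non-well-bracketed pattern can occur: if thread `i` calls at `l₁` and returns from that call
at `l₃`, a symbol pushed by the other thread at `l₂ ∈ (l₁, l₃)` lies above thread `i`'s symbol,
so it must be popped, by a matching return, before `l₃`.
-/

theorem Relation.ReflTransGen.exists_seq {α : Type*} {r : α → α → Prop} {a b : α}
    (h : Relation.ReflTransGen r a b) :
    ∃ (n : ℕ) (f : ℕ → α), f 0 = a ∧ f n = b ∧ ∀ k < n, r (f k) (f (k + 1)) := by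
  induction h with
  | refl => exact ⟨0, fun _ => a, rfl, rfl, nofun⟩
  | @tail b c _ hbc ih =>
    obtain ⟨n, f, hf₀, hfn, hf⟩ := ih
    refine ⟨n + 1, Function.update f (n + 1) c, by simpa using hf₀, by simp, fun k hk => ?_⟩
    rcases Nat.lt_succ_iff_lt_or_eq.mp hk with hk | rfl
    · simpa [Function.update_of_ne (show k ≠ n + 1 by omega),
        Function.update_of_ne (show k + 1 ≠ n + 1 by omega)] using hf k hk
    · simpa [hfn] using hbc

namespace TaggedStack

variable {A L : Type} (t : A → Fin 2)

/-- The stack of `P_comb`, abstracted: `t` tags each symbol with the thread that pushed it. -/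
def Step : List A → Label L × Fin 2 → List A → Prop
  | w, (.push, i), w' => ∃ a, t a = i ∧ w' = w ++ [a]
  | w, (.pop, i), w' => ∃ a, t a = i ∧ w = w' ++ [a]
  | w, _, w' => w' = w

def count (i : Fin 2) (w : List A) : ℕ := w.countP (t · = i)

def IsRun (W : ℕ → List A) (lab : ℕ → Label L × Fin 2) (len : ℕ) : Prop :=
  ∀ k < len, Step t (W k) (lab k) (W (k + 1))

variable {t}

theorem count_le_of_isPrefix {i : Fin 2} {u w : List A} (h : u <+: w) :
    count t i u ≤ count t i w :=
  h.sublist.countP_le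

theorem count_append_singleton {i : Fin 2} {a : A} (w : List A) (ha : t a = i) :
    count t i (w ++ [a]) = count t i w + 1 := by
  simp [count, List.countP_append, ha]

theorem Step.isPrefix {w w' u : List A} {lb : Label L × Fin 2} (h : Step t w lb w')
    (hu : u <+: w) (hlen : u.length ≤ w'.length) : u <+: w' := by
  rcases lb with ⟨_ | _ | _ | _ | _, i⟩
  all_goals simp only [Step] at h
  case push => obtain ⟨a, -, rfl⟩ := h; exact hu.trans (List.prefix_append _ _)
  case pop =>
    obtain ⟨a, -, rfl⟩ := h
    exact List.prefix_of_prefix_length_le hu (List.prefix_append _ _) hlen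
  all_goals rwa [h]

theorem Step.eq_append_of_length_lt {w w' : List A} {lb : Label L × Fin 2}
    (h : Step t w lb w') (hlen : w'.length < w.length) :
    lb.1 = .pop ∧ ∃ a, t a = lb.2 ∧ w = w' ++ [a] := by
  rcases lb with ⟨_ | _ | _ | _ | _, i⟩
  all_goals simp only [Step] at h
  case pop => exact ⟨rfl, h⟩
  case push => obtain ⟨a, -, rfl⟩ := h; simp at hlen
  all_goals subst h; exact absurd hlen (lt_irrefl _)

variable {W : ℕ → List A} {lab : ℕ → Label L × Fin 2} {len : ℕ}

theorem IsRun.isPrefix (hW : IsRun t W lab len) {u : List A} {a b : ℕ} (hab : a ≤ b)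
    (hb : b ≤ len) (hu : u <+: W a) (hlen : ∀ p, a ≤ p → p ≤ b → u.length ≤ (W p).length) :
    u <+: W b := by
  induction b, hab using Nat.le_induction with
  | base => exact hu
  | succ b hab ih =>
    exact (hW b (by omega)).isPrefix (ih (by omega) fun p hp hpb => hlen p hp (by omega))
      (hlen (b + 1) (by omega) le_rfl)

theorem IsRun.exists_first_pop (hW : IsRun t W lab len) {x : A} {l m : ℕ} (hm : m < len)
    (hpush : W (l + 1) = W l ++ [x])
    (hdrop : ∃ p, l < p ∧ p ≤ m ∧ (W (p + 1)).length < (W (l + 1)).length) :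
    ∃ j, l < j ∧ j ≤ m ∧ lab j = (.pop, t x) ∧ W (j + 1) = W l ∧
      ∀ p, l < p → p ≤ j → W (l + 1) <+: W p := by
  classical
  obtain ⟨hlj, hjm, hj⟩ := Nat.find_spec hdrop
  set j := Nat.find hdrop
  have hlong : ∀ p, l < p → p ≤ j → (W (l + 1)).length ≤ (W p).length := by
    intro p hlp hpj
    obtain ⟨q, rfl⟩ : ∃ q, p = q + 1 := ⟨p - 1, by omega⟩
    by_contra! hq
    rcases Nat.eq_or_lt_of_le (Nat.le_of_lt_succ hlp) with rfl | hlq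
    · exact lt_irrefl _ hq
    · exact Nat.find_min hdrop (show q < j by omega) ⟨hlq, by omega, hq⟩
  have hpre : ∀ p, l < p → p ≤ j → W (l + 1) <+: W p := fun p hlp hpj =>
    hW.isPrefix hlp (by omega) List.prefix_rfl fun q hq hqp => hlong q (by omega) (by omega)
  obtain ⟨hpop, a, ha, hWj⟩ := (hW j (by omega)).eq_append_of_length_lt
    (hj.trans_le (hlong j hlj le_rfl))
  have htop : W j = W (l + 1) := by
    refine ((hpre j hlj le_rfl).eq_of_length ?_).symm
    have := hlong j hlj le_rfl
    rw [hWj, List.length_append] at this ⊢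
    simp only [List.length_singleton] at this ⊢
    omega
  obtain ⟨hbelow, hxa⟩ := List.append_inj' (hWj.symm.trans (htop.trans hpush)) rfl
  obtain rfl : a = x := by simpa using hxa
  exact ⟨j, hlj, hjm, Prod.ext hpop ha.symm, hbelow, hpre⟩

theorem IsRun.exists_matching_pop (hW : IsRun t W lab len) {i i' : Fin 2} {l₁ l₂ l₃ : ℕ}
    (h₁₂ : l₁ < l₂) (h₂₃ : l₂ < l₃) (h₃ : l₃ < len)
    (hl₁ : lab l₁ = (.push, i)) (hl₂ : lab l₂ = (.push, i'))
    (hret : count t i (W l₁) = count t i (W (l₃ + 1)))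
    (hlow : ∀ p, l₁ + 1 ≤ p → p ≤ l₃ → count t i (W (l₁ + 1)) ≤ count t i (W p)) :
    ∃ j, l₂ < j ∧ j ≤ l₃ ∧ lab j = (.pop, i') ∧
      count t i' (W l₂) = count t i' (W (j + 1)) ∧
      ∀ p, l₂ + 1 ≤ p → p ≤ j → count t i' (W (l₂ + 1)) ≤ count t i' (W p) := by
  obtain ⟨a₁, ha₁, hW₁⟩ := hl₁ ▸ hW l₁ (by omega)
  obtain ⟨a₂, rfl, hW₂⟩ := hl₂ ▸ hW l₂ (by omega)
  have hdrop : ∃ p, l₂ < p ∧ p ≤ l₃ ∧ (W (p + 1)).length < (W (l₂ + 1)).length := by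
    by_contra! hno
    have hkept : W (l₂ + 1) <+: W (l₃ + 1) :=
      hW.isPrefix (by omega) (by omega) List.prefix_rfl fun p hp hp' => by
        rcases Nat.eq_or_lt_of_le hp with rfl | hlt
        · exact le_rfl
        obtain ⟨k, rfl⟩ := Nat.exists_eq_add_of_lt hlt
        exact hno (l₂ + 1 + k) (by omega) (by omega)
    have := calc
      count t i (W l₁) + 1 = count t i (W (l₁ + 1)) := by rw [hW₁, count_append_singleton _ ha₁]
      _ ≤ count t i (W l₂) := hlow l₂ (by omega) (by omega)
      _ ≤ count t i (W (l₂ + 1)) := count_le_of_isPrefix (hW₂ ▸ List.prefix_append _ _)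
      _ ≤ count t i (W (l₃ + 1)) := count_le_of_isPrefix hkept
    omega
  obtain ⟨j, h₂j, hj₃, hlabj, hWj, hpre⟩ := hW.exists_first_pop h₃ hW₂ hdrop
  exact ⟨j, h₂j, hj₃, hlabj, by rw [hWj], fun p hp hpj =>
    count_le_of_isPrefix (hpre p (by omega) hpj)⟩

end TaggedStack

namespace TwoPDS

open TaggedStack

variable {Q₀ Γ₀ Q₁ Γ₁ L : Type} {CP : TwoPDS Q₀ Γ₀ Q₁ Γ₁ L}

theorem Comp.wellBracketed_of_isRun {A : Type} {t : A → Fin 2} {W : ℕ → List A}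
    (c : Comp CP) (hW : IsRun t W c.lab c.len)
    (hheight : ∀ i k, k ≤ c.len → c.height i k = count t i (W k)) : c.WellBracketed := by
  rintro l₁ l₂ l₃ ⟨i, h₁₂, h₂₃, h₃, ⟨-, -, hl₁, -, hret, hlow⟩, hl₂, hlater⟩
  rw [hheight i l₁ (by omega), hheight i (l₃ + 1) (by omega)] at hret
  obtain ⟨j, h₂j, hj₃, hlabj, hretj, hlowj⟩ :=
    hW.exists_matching_pop h₁₂ h₂₃ h₃ hl₁ hl₂ hret fun p hp hp' => by
      rw [← hheight i (l₁ + 1) (by omega), ← hheight i p (by omega)]; exact hlow p hp hp'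
  have hmatch : c.Matching (1 - i) l₂ j := by
    refine ⟨h₂j, by omega, hl₂, hlabj, ?_, fun p hp hpj => ?_⟩
    · rw [hheight _ l₂ (by omega), hheight _ (j + 1) (by omega), hretj]
    · rw [hheight _ (l₂ + 1) (by omega), hheight _ p (by omega)]; exact hlowj p hp hpj
  exact absurd (hlater j hmatch) (by omega)

def stackTag : Γ₀ ⊕ Γ₁ → Fin 2 := Sum.elim (fun _ => 0) (fun _ => 1)

theorem length_filterMap_getLeft? (w : List (Γ₀ ⊕ Γ₁)) :
    (w.filterMap Sum.getLeft?).length = count stackTag 0 w := by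
  rw [List.length_filterMap_eq_countP]
  exact List.countP_congr fun a _ => by cases a <;> simp [stackTag]

theorem length_filterMap_getRight? (w : List (Γ₀ ⊕ Γ₁)) :
    (w.filterMap Sum.getRight?).length = count stackTag 1 w := by
  rw [List.length_filterMap_eq_countP]
  exact List.countP_congr fun a _ => by cases a <;> simp [stackTag]

def combProj (x : CombState Q₀ Q₁ L × List (Γ₀ ⊕ Γ₁)) : Conf Q₀ Γ₀ Q₁ Γ₁ L :=
  ((x.1.1.1, x.2.filterMap Sum.getLeft?, x.1.1.2), (x.1.2.1, x.2.filterMap Sum.getRight?, x.1.2.2))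

theorem exists_step_of_comb_cStep {x y : CombState Q₀ Q₁ L × List (Γ₀ ⊕ Γ₁)}
    (h : CP.comb.CStep x y) :
    ∃ lb, CP.Step (combProj x) lb (combProj y) ∧ TaggedStack.Step stackTag x.2 lb y.2 := by
  obtain ⟨⟨⟨p₀, g₀⟩, p₁, g₁⟩, v⟩ := x
  obtain ⟨⟨⟨q₀, h₀⟩, q₁, h₁⟩, w⟩ := y
  rcases h with ⟨hm, rfl⟩ | ⟨a, hm, rfl⟩ | ⟨a, hm, rfl⟩
  · rcases hm with ⟨hm, rfl, rfl, rfl⟩ | ⟨hm, rfl, rfl, rfl⟩ |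
      ⟨l, hm, hfree, rfl, rfl, rfl⟩ | ⟨l, hm, hfree, rfl, rfl, rfl⟩ |
      ⟨l, hm, hl, rfl, rfl, rfl⟩ | ⟨l, hm, hl, rfl, rfl, rfl⟩
    · exact ⟨(.state, 0), .inl ⟨rfl, ⟨hm, rfl, rfl⟩, rfl⟩, rfl⟩
    · exact ⟨(.state, 1), .inr ⟨rfl, ⟨hm, rfl, rfl⟩, rfl⟩, rfl⟩
    · exact ⟨(.acq l, 0), .inl ⟨rfl, ⟨hm, not_or.mp hfree, rfl, rfl⟩, rfl⟩, rfl⟩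
    · exact ⟨(.acq l, 1), .inr ⟨rfl, ⟨hm, not_or.mp hfree, rfl, rfl⟩, rfl⟩, rfl⟩
    · exact ⟨(.rel l, 0), .inl ⟨rfl, ⟨hm, hl, rfl, rfl⟩, rfl⟩, rfl⟩
    · exact ⟨(.rel l, 1), .inr ⟨rfl, ⟨hm, hl, rfl, rfl⟩, rfl⟩, rfl⟩
  · rcases hm with ⟨b, rfl, hm, rfl, rfl, rfl⟩ | ⟨b, rfl, hm, rfl, rfl, rfl⟩
    · exact ⟨(.push, 0), .inl ⟨rfl, ⟨b, hm, by simp [combProj], rfl⟩, by simp [combProj]⟩,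
        ⟨.inl b, rfl, rfl⟩⟩
    · exact ⟨(.push, 1), .inr ⟨rfl, ⟨b, hm, by simp [combProj], rfl⟩, by simp [combProj]⟩,
        ⟨.inr b, rfl, rfl⟩⟩
  · rcases hm with ⟨b, rfl, hm, rfl, rfl, rfl⟩ | ⟨b, rfl, hm, rfl, rfl, rfl⟩
    · exact ⟨(.pop, 0), .inl ⟨rfl, ⟨b, hm, by simp [combProj], rfl⟩, by simp [combProj]⟩,
        ⟨.inl b, rfl, rfl⟩⟩
    · exact ⟨(.pop, 1), .inr ⟨rfl, ⟨b, hm, by simp [combProj], rfl⟩, by simp [combProj]⟩,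
        ⟨.inr b, rfl, rfl⟩⟩

end TwoPDS

theorem comb_reachable_implies_wellBracketed_reachable_general
    {Q₀ Γ₀ Q₁ Γ₁ L : Type}
    (CP : TwoPDS Q₀ Γ₀ Q₁ Γ₁ L)
    (q₀ : Q₀) (h₀ : Set L) (q₁ : Q₁) (h₁ : Set L) (w : List (Γ₀ ⊕ Γ₁))
    (hr : CP.comb.Reachable (((q₀, h₀), (q₁, h₁)), w)) :
    ∃ c : TwoPDS.Comp CP, c.WellBracketed ∧
      c.s c.len = ((q₀, w.filterMap Sum.getLeft?, h₀), (q₁, w.filterMap Sum.getRight?, h₁)) := by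
  obtain ⟨n, f, hf₀, hfn, hf⟩ := hr.exists_seq
  have hsim : ∀ k, ∃ lb : Label L × Fin 2, k < n →
      CP.Step (TwoPDS.combProj (f k)) lb (TwoPDS.combProj (f (k + 1))) ∧
        TaggedStack.Step TwoPDS.stackTag (f k).2 lb (f (k + 1)).2 := fun k => by
    by_cases hk : k < n
    · obtain ⟨lb, hlb⟩ := TwoPDS.exists_step_of_comb_cStep (hf k hk)
      exact ⟨lb, fun _ => hlb⟩
    · exact ⟨(.state, 0), fun h => absurd h hk⟩
  choose lab hlab using hsim
  let c : TwoPDS.Comp CP := ⟨n, TwoPDS.combProj ∘ f, lab,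
    by rw [Function.comp_apply, hf₀]; rfl, fun k hk => (hlab k hk).1⟩
  have hheight :
      ∀ i k, k ≤ c.len → c.height i k = TaggedStack.count TwoPDS.stackTag i (f k).2 := by
    intro i k _
    fin_cases i
    · exact TwoPDS.length_filterMap_getLeft? _
    · exact TwoPDS.length_filterMap_getRight? _
  exact ⟨c, c.wellBracketed_of_isRun (fun k hk => (hlab k hk).2) hheight,
    congrArg TwoPDS.combProj hfn⟩

/-- Every reachable configuration `(((q₀,h₀),(q₁,h₁)), w)` of the
combined pushdown system of a 2-PDS `CP` projects to a configuration of `CP`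
(restricting `w` to each thread's stack alphabet) that is reachable by a
well-bracketed computation of `CP`. -/
theorem comb_reachable_implies_wellBracketed_reachable
    {Q₀ Γ₀ Q₁ Γ₁ L : Type} [Finite Q₀] [Finite Γ₀] [Finite Q₁] [Finite Γ₁] [Finite L]
    (CP : TwoPDS Q₀ Γ₀ Q₁ Γ₁ L)
    (q₀ : Q₀) (h₀ : Set L) (q₁ : Q₁) (h₁ : Set L) (w : List (Γ₀ ⊕ Γ₁))
    (hr : CP.comb.Reachable (((q₀, h₀), (q₁, h₁)), w)) :
    ∃ c : TwoPDS.Comp CP, c.WellBracketed ∧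
      c.s c.len = ((q₀, w.filterMap Sum.getLeft?, h₀), (q₁, w.filterMap Sum.getRight?, h₁)) :=
  comb_reachable_implies_wellBracketed_reachable_general CP q₀ h₀ q₁ h₁ w hr
end

section
/- Let CP=(P_0,P_1) be a 2-PDS communicating via a finite set Locks (with disjoint state sets and stack alphabets) and let P_comb be the combined pushdown system. For every well-bracketed computation of CP ending in a configuration ((q_0,w_0,held_0),(q_1,w_1,held_1)), there is a reachable configuration (((q_0,held_0),(q_1,held_1)), w) of P_comb such that w restricted to Gamma_0 equals w_0 and w restricted to Gamma_1 equals w_1, where w restricted to Gamma_i denotes the subword of w consisting of its letters belonging to Gamma_i. -/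
/-!
The computation is replayed step by step in `P_comb` on a single combined stack whose
restrictions to `Γ₀` and `Γ₁` are the two thread stacks, with symbols in the order in which
they were pushed. Internal moves, lock operations and calls are mirrored directly. A return of
thread `i` must pop the topmost `Γ_i`-symbol, which `P_comb` can do only if it is the top of
the combined stack. If a symbol of the other thread lay above it, the call that pushed that
symbol was made after the call matched by the return and is still pending at the return:
a witness of non-well-bracketing. To find the witness, every symbol carries its push time.
-/

lemma List.exists_last_eq_append_cons {α : Type*} (p : α → Prop) [DecidablePred p]
    {l : List α} (h : ∃ a ∈ l, p a) : ∃ u x v, l = u ++ x :: v ∧ p x ∧ ∀ y ∈ v, ¬ p y := by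
  obtain ⟨a, ha, hpa⟩ := h
  obtain ⟨x, l₁, l₂, hl₁, hx, hrev, -⟩ :=
    List.exists_of_eraseP (p := fun a => decide (p a)) (List.mem_reverse.2 ha) (by simpa)
  refine ⟨l₂.reverse, x, l₁.reverse, ?_, by simpa using hx, by simpa using hl₁⟩
  rw [← List.reverse_reverse l, hrev]
  simp

namespace TwoPDS

variable {Q₀ Γ₀ Q₁ Γ₁ L : Type}

def thread : Γ₀ ⊕ Γ₁ → Fin 2
  | .inl _ => 0
  | .inr _ => 1

def ctrl (s : Conf Q₀ Γ₀ Q₁ Γ₁ L) : CombState Q₀ Q₁ L := ((s.1.1, s.1.2.2), (s.2.1, s.2.2.2))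

def stacksOf (s : Conf Q₀ Γ₀ Q₁ Γ₁ L) : List Γ₀ × List Γ₁ := (s.1.2.1, s.2.2.1)

def proj (w : List (Γ₀ ⊕ Γ₁)) : List Γ₀ × List Γ₁ :=
  (w.filterMap Sum.getLeft?, w.filterMap Sum.getRight?)

def pushSym : List Γ₀ × List Γ₁ → Γ₀ ⊕ Γ₁ → List Γ₀ × List Γ₁
  | (w₀, w₁), .inl a => (w₀ ++ [a], w₁)
  | (w₀, w₁), .inr b => (w₀, w₁ ++ [b])

lemma proj_append_singleton (w : List (Γ₀ ⊕ Γ₁)) (a : Γ₀ ⊕ Γ₁) :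
    proj (w ++ [a]) = pushSym (proj w) a := by
  cases a <;> simp [proj, pushSym]

lemma pushSym_inj {p p' : List Γ₀ × List Γ₁} {a a' : Γ₀ ⊕ Γ₁} (hth : thread a = thread a')
    (h : pushSym p a = pushSym p' a') : p = p' ∧ a = a' := by
  obtain ⟨w₀, w₁⟩ := p
  obtain ⟨w₀', w₁'⟩ := p'
  cases a <;> cases a' <;> simp_all [pushSym, thread]

variable {CP : TwoPDS Q₀ Γ₀ Q₁ Γ₁ L} {s t : Conf Q₀ Γ₀ Q₁ Γ₁ L} {c : Comp CP} {i : Fin 2} {k : ℕ}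
  {w : List (ℕ × (Γ₀ ⊕ Γ₁))}

lemma Step.comb_internal {lab : Label L} (h : CP.Step s (lab, i) t) (hpush : lab ≠ .push)
    (hpop : lab ≠ .pop) : (ctrl s, ctrl t) ∈ CP.comb.stateTr ∧ stacksOf t = stacksOf s := by
  obtain ⟨⟨q₀, w₀, h₀⟩, ⟨q₁, w₁, h₁⟩⟩ := s
  obtain ⟨⟨q₀', w₀', h₀'⟩, ⟨q₁', w₁', h₁'⟩⟩ := t
  rcases h with ⟨-, h, ht⟩ | ⟨-, h, ht⟩ <;> cases lab <;>
    simp_all [PDS.LStep, comb, ctrl, stacksOf, freeLocks] <;> aesop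

lemma Step.comb_push (h : CP.Step s (.push, i) t) :
    ∃ a, thread a = i ∧ (ctrl s, (ctrl t, a)) ∈ CP.comb.pushTr ∧
      stacksOf t = pushSym (stacksOf s) a := by
  rcases h with ⟨rfl, ⟨a, hA, hw, hh⟩, ht⟩ | ⟨rfl, ⟨a, hA, hw, hh⟩, ht⟩
  · exact ⟨.inl a, rfl, by simp [comb, ctrl, hA, hh, ht], by simp [stacksOf, pushSym, hw, ht]⟩
  · exact ⟨.inr a, rfl, by simp [comb, ctrl, hA, hh, ht], by simp [stacksOf, pushSym, hw, ht]⟩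

lemma Step.comb_pop (h : CP.Step s (.pop, i) t) :
    ∃ a, thread a = i ∧ ((ctrl s, a), ctrl t) ∈ CP.comb.popTr ∧
      stacksOf s = pushSym (stacksOf t) a := by
  rcases h with ⟨rfl, ⟨a, hA, hw, hh⟩, ht⟩ | ⟨rfl, ⟨a, hA, hw, hh⟩, ht⟩
  · exact ⟨.inl a, rfl, by simp [comb, ctrl, hA, hh, ht], by simp [stacksOf, pushSym, hw, ht]⟩
  · exact ⟨.inr a, rfl, by simp [comb, ctrl, hA, hh, ht], by simp [stacksOf, pushSym, hw, ht]⟩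

namespace Comp

lemma height_eq_countP (h : stacksOf (c.s k) = proj (w.map Prod.snd)) (i : Fin 2) :
    c.height i k = w.countP (fun e => thread e.2 = i) := by
  simp only [stacksOf, proj, Prod.ext_iff] at h
  obtain rfl | rfl : i = 0 ∨ i = 1 := by omega
  all_goals
    simp only [height, h, List.length_filterMap_eq_countP, List.countP_map]
    refine List.countP_congr fun ⟨_, a⟩ _ => ?_
    cases a <;> simp [thread]

lemma height_of_pushSym {k' : ℕ} {a : Γ₀ ⊕ Γ₁}
    (h : stacksOf (c.s k') = pushSym (stacksOf (c.s k)) a) :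
    c.height (thread a) k' = c.height (thread a) k + 1 := by
  cases a <;> simp_all [height, stacksOf, pushSym, thread, Prod.ext_iff]

lemma height_succ_of_push {t : ℕ} (ht : t < c.len) (hlab : c.lab t = (.push, i)) :
    c.height i (t + 1) = c.height i t + 1 := by
  have hstep := c.step t ht
  rw [hlab] at hstep
  obtain ⟨a, rfl, -, hst⟩ := hstep.comb_push
  exact height_of_pushSym hst

/-- The call of thread `i` at time `t` has not returned by time `k`. -/
def Pending (c : Comp CP) (i : Fin 2) (t k : ℕ) : Prop :=
  t < k ∧ c.lab t = (.push, i) ∧ ∀ r, t < r → r ≤ k → c.height i t < c.height i r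

lemma Pending.succ {t : ℕ} (hp : c.Pending i t k) (hh : c.height i t < c.height i (k + 1)) :
    c.Pending i t (k + 1) := by
  refine ⟨Nat.lt_succ_of_lt hp.1, hp.2.1, fun r htr hrk => ?_⟩
  rcases Nat.lt_or_eq_of_le hrk with hrk | rfl
  · exact hp.2.2 r htr (Nat.le_of_lt_succ hrk)
  · exact hh

lemma Pending.le_of_matching {t j : ℕ} (hp : c.Pending i t k) (hm : c.Matching i t j) :
    k ≤ j := by
  by_contra! hjk
  have := hp.2.2 (j + 1) (Nat.lt_succ_of_lt hm.1) hjk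
  rw [hm.2.2.2.2.1] at this
  exact lt_irrefl _ this

lemma Pending.matching {t : ℕ} (hp : c.Pending i t k) (hk : k < c.len)
    (hlab : c.lab k = (.pop, i)) (hh : c.height i t = c.height i (k + 1)) : c.Matching i t k := by
  refine ⟨hp.1, hk, hp.2.1, hlab, hh, fun p htp hpk => ?_⟩
  rw [height_succ_of_push (hp.1.trans hk) hp.2.1]
  exact hp.2.2 p htp hpk

theorem not_wellBracketed_of_pending {t t' : ℕ} (hx : c.Pending i t k)
    (hy : c.Pending (1 - i) t' k) (htt' : t < t') (hk : k < c.len)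
    (hlab : c.lab k = (.pop, i)) (hh : c.height i t = c.height i (k + 1)) :
    ¬ c.WellBracketed := by
  refine fun hwb => hwb t t' k ⟨i, htt', hy.1, hk, hx.matching hk hlab hh, hy.2.1, fun j hj => ?_⟩
  refine lt_of_le_of_ne (hy.le_of_matching hj) fun hkj => ?_
  have hthread := congrArg Prod.snd (hlab.symm.trans (hkj ▸ hj.2.2.2.1))
  simp only at hthread
  omega

end Comp

/-- An entry `e` of `w` is the stack symbol `e.2` tagged with the time `e.1` of its push. -/
def PendingEntries (c : Comp CP) (k : ℕ) (w : List (ℕ × (Γ₀ ⊕ Γ₁))) : Prop :=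
  ∀ u e, u ++ [e] <+: w → c.Pending (thread e.2) e.1 k ∧
    c.height (thread e.2) e.1 = u.countP (fun e' => thread e'.2 = thread e.2)

lemma PendingEntries.lt_of_mem (h : PendingEntries c k w)
    {e : ℕ × (Γ₀ ⊕ Γ₁)} (he : e ∈ w) : e.1 < k := by
  obtain ⟨u, v, rfl⟩ := List.append_of_mem he
  exact (h u e ⟨v, by simp⟩).1.1

lemma PendingEntries.succ_of_append {v : List (ℕ × (Γ₀ ⊕ Γ₁))}
    (h : PendingEntries c k (w ++ v))
    (hw : ∀ i, w.countP (fun e => thread e.2 = i) ≤ c.height i (k + 1)) :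
    PendingEntries c (k + 1) w := by
  rintro u e ⟨r, rfl⟩
  obtain ⟨hp, hh⟩ := h u e ⟨r ++ v, by simp⟩
  refine ⟨hp.succ ?_, hh⟩
  have := hw (thread e.2)
  simp only [List.countP_append, List.countP_singleton, decide_true, if_true] at this
  omega

lemma PendingEntries.append_singleton (h : PendingEntries c k w) {x : ℕ × (Γ₀ ⊕ Γ₁)}
    (hx : c.Pending (thread x.2) x.1 k)
    (hxh : c.height (thread x.2) x.1 = w.countP (fun e => thread e.2 = thread x.2)) :
    PendingEntries c k (w ++ [x]) := by
  intro u e hue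
  rcases List.prefix_concat_iff.1 hue with hue | hue
  · obtain ⟨rfl, rfl⟩ : u = w ∧ e = x := by simpa using hue
    exact ⟨hx, hxh⟩
  · exact h u e hue


structure Simulates (c : Comp CP) (k : ℕ) (w : List (ℕ × (Γ₀ ⊕ Γ₁))) : Prop where
  sorted : w.Pairwise (fun e e' => e.1 < e'.1)
  pending : PendingEntries c k w
  stacksOf_eq : stacksOf (c.s k) = proj (w.map Prod.snd)
  reachable : CP.comb.Reachable (ctrl (c.s k), w.map Prod.snd)

lemma Simulates.height_eq (h : Simulates c k w) (i : Fin 2) :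
    c.height i k = w.countP (fun e => thread e.2 = i) :=
  Comp.height_eq_countP h.stacksOf_eq i

lemma simulates_zero : Simulates c 0 [] where
  sorted := List.Pairwise.nil
  pending _ _ h := by simpa using h.length_le
  stacksOf_eq := by simp [c.init, initConf, stacksOf, proj]
  reachable := by rw [c.init]; exact .refl

lemma Simulates.succ_internal (h : Simulates c k w) (hk : k < c.len) {lab : Label L}
    (hlab : c.lab k = (lab, i)) (hpush : lab ≠ .push) (hpop : lab ≠ .pop) :
    Simulates c (k + 1) w := by
  have hstep := c.step k hk
  rw [hlab] at hstep
  obtain ⟨hcomb, hst⟩ := hstep.comb_internal hpush hpop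
  have hst' : stacksOf (c.s (k + 1)) = proj (w.map Prod.snd) := hst.trans h.stacksOf_eq
  refine ⟨h.sorted, ?_, hst', h.reachable.tail (Or.inl ⟨hcomb, rfl⟩)⟩
  exact PendingEntries.succ_of_append (v := []) (by simpa using h.pending)
    fun j => (Comp.height_eq_countP hst' j).ge

lemma Simulates.succ_push (h : Simulates c k w) (hk : k < c.len) (hlab : c.lab k = (.push, i)) :
    ∃ w', Simulates c (k + 1) w' := by
  have hstep := c.step k hk
  rw [hlab] at hstep
  obtain ⟨a, rfl, hcomb, hst⟩ := hstep.comb_push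
  have hst' : stacksOf (c.s (k + 1)) = proj ((w ++ [(k, a)]).map Prod.snd) := by
    rw [hst, h.stacksOf_eq, List.map_append, List.map_singleton, proj_append_singleton]
  have hheight := Comp.height_eq_countP hst'
  refine ⟨w ++ [(k, a)], ?_, ?_, hst', ?_⟩
  · exact List.pairwise_append.2 ⟨h.sorted, List.pairwise_singleton _ _,
      fun e he x hx => (List.mem_singleton.1 hx) ▸ h.pending.lt_of_mem he⟩
  · refine PendingEntries.append_singleton ?_ ?_ (h.height_eq _)
    · refine PendingEntries.succ_of_append (v := []) (by simpa using h.pending) fun j => ?_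
      simp [hheight j]
    · refine ⟨Nat.lt_succ_self k, hlab, fun r hkr hrk => ?_⟩
      rw [le_antisymm hrk hkr, Comp.height_of_pushSym hst]
      exact Nat.lt_succ_self _
  · exact h.reachable.tail (Or.inr (Or.inl ⟨a, hcomb, by simp⟩))

lemma Simulates.eq_append_of_pop (h : Simulates c k w) (hwb : c.WellBracketed)
    (hk : k < c.len) (hlab : c.lab k = (.pop, i)) :
    ∃ u x, w = u ++ [x] ∧ thread x.2 = i := by
  have hstep := c.step k hk
  rw [hlab] at hstep
  obtain ⟨a, rfl, -, hst⟩ := hstep.comb_pop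
  have hheight := Comp.height_of_pushSym hst
  have hmem : ∃ e ∈ w, thread e.2 = thread a := by
    have : 0 < w.countP (fun e => thread e.2 = thread a) := by
      rw [← h.height_eq, hheight]
      exact Nat.succ_pos _
    simpa using this
  obtain ⟨u, x, v, rfl, hx, hv⟩ := List.exists_last_eq_append_cons _ hmem
  rcases v.eq_nil_or_concat with rfl | ⟨v, y, rfl⟩
  · exact ⟨u, x, rfl, hx⟩
  have hy : thread y.2 ≠ thread a := hv y (by simp)
  obtain ⟨hxp, hxh⟩ := h.pending u x ⟨v ++ [y], by simp⟩
  obtain ⟨hyp, -⟩ := h.pending (u ++ x :: v) y ⟨[], by simp⟩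
  have hxy : x.1 < y.1 :=
    (List.pairwise_cons.1 (List.pairwise_append.1 h.sorted).2.1).1 y (by simp)
  refine absurd hwb (Comp.not_wellBracketed_of_pending (hx ▸ hxp)
    ((by omega : thread y.2 = 1 - thread a) ▸ hyp) hxy hk hlab ?_)
  have hv0 : v.countP (fun e => thread e.2 = thread a) = 0 :=
    List.countP_eq_zero.2 fun e he => by simpa using hv e (by simp [he])
  rw [hx] at hxh
  rw [hxh, ← Nat.add_right_cancel_iff, ← hheight, h.height_eq]
  simp [hv0, hx, hy]

lemma Simulates.succ_pop (h : Simulates c k w) (hwb : c.WellBracketed) (hk : k < c.len)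
    (hlab : c.lab k = (.pop, i)) : ∃ w', Simulates c (k + 1) w' := by
  obtain ⟨u, x, rfl, hx⟩ := h.eq_append_of_pop hwb hk hlab
  have hstep := c.step k hk
  rw [hlab] at hstep
  obtain ⟨a, hai, hcomb, hst⟩ := hstep.comb_pop
  obtain ⟨hst', rfl⟩ : proj (u.map Prod.snd) = stacksOf (c.s (k + 1)) ∧ x.2 = a := by
    refine pushSym_inj (hx.trans hai.symm) ?_
    rw [← proj_append_singleton, ← hst, h.stacksOf_eq, List.map_append, List.map_singleton]
  refine ⟨u, (List.pairwise_append.1 h.sorted).1, ?_, hst'.symm, ?_⟩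
  · exact h.pending.succ_of_append fun j => (Comp.height_eq_countP hst'.symm j).ge
  · exact h.reachable.tail (Or.inr (Or.inr ⟨x.2, hcomb, by simp⟩))

lemma Simulates.succ (h : Simulates c k w) (hwb : c.WellBracketed) (hk : k < c.len) :
    ∃ w', Simulates c (k + 1) w' := by
  rcases hlab : c.lab k with ⟨lab, i⟩
  cases lab with
  | push => exact h.succ_push hk hlab
  | pop => exact h.succ_pop hwb hk hlab
  | state | acq _ | rel _ => exact ⟨w, h.succ_internal hk hlab (by simp) (by simp)⟩

theorem exists_simulates (hwb : c.WellBracketed) : ∀ k ≤ c.len, ∃ w, Simulates c k w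
  | 0, _ => ⟨[], simulates_zero⟩
  | k + 1, hk =>
    have ⟨_, hw⟩ := exists_simulates hwb k (by omega)
    hw.succ hwb (by omega)

end TwoPDS

theorem wellBracketed_reachable_implies_comb_reachable_general
    {Q₀ Γ₀ Q₁ Γ₁ L : Type}
    (CP : TwoPDS Q₀ Γ₀ Q₁ Γ₁ L) (c : TwoPDS.Comp CP) (hwb : c.WellBracketed)
    (q₀ : Q₀) (w₀ : List Γ₀) (h₀ : Set L) (q₁ : Q₁) (w₁ : List Γ₁) (h₁ : Set L)
    (hend : c.s c.len = ((q₀, w₀, h₀), (q₁, w₁, h₁))) :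
    ∃ w : List (Γ₀ ⊕ Γ₁), CP.comb.Reachable (((q₀, h₀), (q₁, h₁)), w) ∧
      w.filterMap Sum.getLeft? = w₀ ∧ w.filterMap Sum.getRight? = w₁ := by
  obtain ⟨w, hw⟩ := TwoPDS.exists_simulates hwb c.len le_rfl
  have hstacks := hw.stacksOf_eq
  have hreach := hw.reachable
  rw [hend] at hstacks hreach
  simp only [TwoPDS.stacksOf, TwoPDS.proj, Prod.ext_iff] at hstacks
  exact ⟨w.map Prod.snd, hreach, hstacks.1.symm, hstacks.2.symm⟩

/-- For every well-bracketed computation of a 2-PDS `CP` ending in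
the configuration `((q₀,w₀,h₀),(q₁,w₁,h₁))`, some configuration
`(((q₀,h₀),(q₁,h₁)), w)` of the combined pushdown system is reachable, where `w`
restricted to `Γ₀` is `w₀` and `w` restricted to `Γ₁` is `w₁`. -/
theorem wellBracketed_reachable_implies_comb_reachable
    {Q₀ Γ₀ Q₁ Γ₁ L : Type} [Finite Q₀] [Finite Γ₀] [Finite Q₁] [Finite Γ₁] [Finite L]
    (CP : TwoPDS Q₀ Γ₀ Q₁ Γ₁ L) (c : TwoPDS.Comp CP) (hwb : c.WellBracketed)
    (q₀ : Q₀) (w₀ : List Γ₀) (h₀ : Set L) (q₁ : Q₁) (w₁ : List Γ₁) (h₁ : Set L)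
    (hend : c.s c.len = ((q₀, w₀, h₀), (q₁, w₁, h₁))) :
    ∃ w : List (Γ₀ ⊕ Γ₁), CP.comb.Reachable (((q₀, h₀), (q₁, h₁)), w) ∧
      w.filterMap Sum.getLeft? = w₀ ∧ w.filterMap Sum.getRight? = w₁ :=
  wellBracketed_reachable_implies_comb_reachable_general CP c hwb q₀ w₀ h₀ q₁ w₁ h₁ hend
end

section
/- Let CP=(P_0,P_1) be a 2-PDS communicating via a finite set Locks and let Comp = s_0 -> ... -> s_m be a non-well-bracketed computation of CP. Let l_min be the least first component over all witnesses of non-well-bracketing of Comp, suppose the transition at position l_min is a procedure call of thread i, let l_rt be the position of its matching return, and let l_sm be the least second component among witnesses of the form (l_min, l_2, l_rt). Then: (1) every procedure return of thread 1-i at a position p with l_min < p < l_sm has its matching call at a position strictly greater than l_min; and (2) every procedure call of thread 1-i at a position p with l_min < p < l_sm has a matching return at a position strictly less than l_sm. -/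
def Label.stackDelta {L : Type} : Label L → ℤ
  | .push => 1
  | .pop => -1
  | _ => 0

lemma Label.eq_pop_of_stackDelta_neg {L : Type} {lab : Label L} (h : lab.stackDelta < 0) :
    lab = .pop := by
  cases lab <;> simp_all [Label.stackDelta]

lemma PDS.LStep.length_eq {Q Γ L : Type} {P : PDS Q Γ L} {free : Set L}
    {c c' : LConf Q Γ L} {lab : Label L} (h : P.LStep free c lab c') :
    (c'.2.1.length : ℤ) = c.2.1.length + lab.stackDelta := by
  cases lab <;> simp only [PDS.LStep] at h
  case push => obtain ⟨_, _, hst, _⟩ := h; simp [hst, Label.stackDelta]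
  case pop => obtain ⟨_, _, hst, _⟩ := h; simp [hst, Label.stackDelta]
  case state => simp [h.2.1, Label.stackDelta]
  all_goals simp [h.2.2.1, Label.stackDelta]

namespace TwoPDS.Comp

variable {Q₀ Γ₀ Q₁ Γ₁ L : Type} {CP : TwoPDS Q₀ Γ₀ Q₁ Γ₁ L} (c : Comp CP)

lemma height_succ {k : ℕ} (hk : k < c.len) (t : Fin 2) :
    (c.height t (k + 1) : ℤ) =
      c.height t k + if (c.lab k).2 = t then (c.lab k).1.stackDelta else 0 := by
  rcases c.step k hk with ⟨hthr, hst, hrest⟩ | ⟨hthr, hst, hrest⟩ <;> fin_cases t <;>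
    simp [height, hthr, hrest, hst.length_eq]

variable {c}

lemma height_succ_of_lab_eq_push {k : ℕ} {t : Fin 2} (hk : k < c.len)
    (h : c.lab k = (.push, t)) : c.height t (k + 1) = c.height t k + 1 := by
  have := c.height_succ hk t
  simp only [h, if_true, Label.stackDelta] at this
  omega

lemma lab_eq_pop_of_height_succ_lt {k : ℕ} {t : Fin 2} (hk : k < c.len)
    (h : c.height t (k + 1) < c.height t k) :
    c.lab k = (.pop, t) ∧ c.height t k = c.height t (k + 1) + 1 := by
  have hstep := c.height_succ hk t
  generalize c.lab k = x at hstep ⊢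
  obtain ⟨lab, t'⟩ := x
  simp only at hstep
  split_ifs at hstep with ht
  · subst ht
    obtain rfl : lab = .pop := Label.eq_pop_of_stackDelta_neg (by omega)
    simp only [Label.stackDelta] at hstep
    exact ⟨rfl, by omega⟩
  · omega

lemma Matching.lab_left {t : Fin 2} {l j : ℕ} (h : c.Matching t l j) :
    c.lab l = (.push, t) :=
  h.2.2.1

lemma Matching.right_eq {t : Fin 2} {l j₁ j₂ : ℕ} (h₁ : c.Matching t l j₁)
    (h₂ : c.Matching t l j₂) : j₁ = j₂ := by
  -- at the earlier return the stack of `t` is already below its height at `l + 1`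
  have key : ∀ {a b}, c.Matching t l a → c.Matching t l b → a ≤ b := by
    intro a b ha hb
    by_contra! hba
    obtain ⟨hla, halen, hpush, -, -, habove⟩ := ha
    obtain ⟨hlb, -, -, -, hback, -⟩ := hb
    have := height_succ_of_lab_eq_push (hla.trans halen) hpush
    have := habove (b + 1) (by omega) hba
    omega
  exact le_antisymm (key h₁ h₂) (key h₂ h₁)

lemma exists_matching_of_height_le {t : Fin 2} {q m : ℕ} (hq : c.lab q = (.push, t))
    (hqm : q < m) (hm : m ≤ c.len) (hh : c.height t m ≤ c.height t q) :
    ∃ j, c.Matching t q j ∧ j < m := by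
  have hpush := height_succ_of_lab_eq_push (by omega) hq
  have hqm' : q + 1 < m := by
    by_contra! h
    obtain rfl : m = q + 1 := by omega
    omega
  have hm : c.height t (m - 1 + 1) ≤ c.height t q := by rwa [Nat.sub_add_cancel (by omega)]
  have hdrop : ∃ j, q < j ∧ c.height t (j + 1) ≤ c.height t q := ⟨m - 1, by omega, hm⟩
  obtain ⟨hqj, hj⟩ := Nat.find_spec hdrop
  have hjm := Nat.find_min' hdrop ⟨(by omega : q < m - 1), hm⟩
  have hmin : ∀ p < Nat.find hdrop, ¬(q < p ∧ c.height t (p + 1) ≤ c.height t q) :=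
    fun p => Nat.find_min (m := p) hdrop
  set j := Nat.find hdrop
  have habove : ∀ p, q + 1 ≤ p → p ≤ j → c.height t q + 1 ≤ c.height t p := by
    intro p hp hpj
    rcases hp.eq_or_lt with rfl | hp
    · omega
    · have := hmin (p - 1) (by omega)
      rw [Nat.sub_add_cancel (by omega)] at this
      omega
  have hjlen : j < c.len := by omega
  have := habove j hqj le_rfl
  obtain ⟨hpop, hjpop⟩ := lab_eq_pop_of_height_succ_lt (t := t) hjlen (by omega)
  refine ⟨j, ⟨hqj, hjlen, hq, hpop, ?_, fun p hp hpj => ?_⟩, by omega⟩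
  · omega
  · rw [hpush]
    exact habove p hp hpj

lemma Matching.exists_matching_of_push_between {t : Fin 2} {p j q : ℕ}
    (hpj : c.Matching t p j) (hpq : p < q) (hqj : q < j) (hq : c.lab q = (.push, t)) :
    ∃ j', c.Matching t q j' ∧ j' < j := by
  obtain ⟨_, hjlen, hp, _, hback, habove⟩ := hpj
  have := height_succ_of_lab_eq_push (by omega) hp
  have := habove q (by omega) hqj.le
  have := habove j (by omega) le_rfl
  obtain ⟨_, hj⟩ := lab_eq_pop_of_height_succ_lt (t := t) hjlen (by omega)
  exact exists_matching_of_height_le hq hqj hjlen.le (by omega)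

lemma witness_of_matching_of_matching {t : Fin 2} {l₁ l₂ l₃ j : ℕ}
    (h₁₃ : c.Matching t l₁ l₃) (h₂j : c.Matching (1 - t) l₂ j) (h₁₂ : l₁ < l₂)
    (h₂₃ : l₂ < l₃) (h₃j : l₃ < j) : c.Witness l₁ l₂ l₃ :=
  ⟨t, h₁₂, h₂₃, h₁₃.2.1, h₁₃, h₂j.lab_left, fun _ h => h₂j.right_eq h ▸ h₃j⟩

lemma witness_of_push_between {t : Fin 2} {l₁ l₂ l₃ p : ℕ}
    (h₁₃ : c.Matching t l₁ l₃) (hl₂ : c.lab l₂ = (.push, 1 - t))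
    (hl₂ret : ∀ j, c.Matching (1 - t) l₂ j → l₃ < j) (h₁p : l₁ < p) (hp₂ : p < l₂)
    (h₂₃ : l₂ < l₃) (hp : c.lab p = (.push, 1 - t))
    (hpret : ∀ j, c.Matching (1 - t) p j → l₂ ≤ j) : c.Witness l₁ p l₃ := by
  refine ⟨t, h₁p, hp₂.trans h₂₃, h₁₃.2.1, h₁₃, hp, fun j hpj => ?_⟩
  have hne : l₂ ≠ j := fun h => by have := hpj.2.2.2.1; simp_all
  by_contra! hj
  obtain ⟨j', hj', hj'j⟩ :=
    hpj.exists_matching_of_push_between hp₂ (lt_of_le_of_ne (hpret j hpj) hne) hl₂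
  exact absurd (hl₂ret j' hj') (by omega)

end TwoPDS.Comp

theorem witness_structure_between_lmin_lsm_general
    {Q₀ Γ₀ Q₁ Γ₁ L : Type}
    (CP : TwoPDS Q₀ Γ₀ Q₁ Γ₁ L) (c : TwoPDS.Comp CP)
    (lmin lsm lrt : ℕ) (i : Fin 2)
    (hleast : ∀ l₁ l₂ l₃, c.Witness l₁ l₂ l₃ → lmin ≤ l₁)
    (hmatch : c.Matching i lmin lrt)
    (hsm : c.Witness lmin lsm lrt)
    (hsmleast : ∀ l₂, c.Witness lmin l₂ lrt → lsm ≤ l₂) :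
    (∀ p lc, lmin < p → p < lsm → c.Matching (1 - i) lc p → lmin < lc) ∧
    (∀ p, lmin < p → p < lsm → p < c.len → c.lab p = (Label.push, 1 - i) →
      ∃ j, c.Matching (1 - i) p j ∧ j < lsm) := by
  obtain ⟨i', -, hlsm_lrt, -, hmatch', hlsm, hlsm_ret⟩ := hsm
  obtain rfl : i = i' := by simpa using hmatch.lab_left.symm.trans hmatch'.lab_left
  refine ⟨fun p lc hp hpsm hret => ?_, fun p hp hpsm _ hpush => ?_⟩
  · by_contra! hlc
    have hne : lc ≠ lmin := by
      rintro rfl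
      have hi : ∀ j : Fin 2, 1 - j ≠ j := by decide
      exact hi i (congrArg Prod.snd (hret.lab_left.symm.trans hmatch.lab_left))
    have hcross : c.Matching (1 - (1 - i)) lmin lrt := by rwa [sub_sub_cancel]
    have := hleast _ _ _ (c.witness_of_matching_of_matching hret hcross
      (lt_of_le_of_ne hlc hne) hp (by omega))
    omega
  · by_contra! hret
    have := hsmleast p
      (c.witness_of_push_between hmatch hlsm hlsm_ret hp hpsm hlsm_lrt hpush hret)
    omega

/-- Let `c` be a non-well-bracketed computation of a 2-PDS,
`lmin` the least first component over all witnesses of non-well-bracketing, the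
transition at `lmin` a procedure call of thread `i` with matching return at `lrt`,
and `lsm` the least second component among witnesses of the form `(lmin, l₂, lrt)`.
Then (1) every procedure return of thread `1-i` at a position strictly between
`lmin` and `lsm` has its matching call strictly after `lmin`, and (2) every
procedure call of thread `1-i` at a position strictly between `lmin` and `lsm`
has a matching return strictly before `lsm`. -/
theorem witness_structure_between_lmin_lsm
    {Q₀ Γ₀ Q₁ Γ₁ L : Type} [Finite Q₀] [Finite Γ₀] [Finite Q₁] [Finite Γ₁] [Finite L]
    (CP : TwoPDS Q₀ Γ₀ Q₁ Γ₁ L) (c : TwoPDS.Comp CP)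
    (lmin lsm lrt : ℕ) (i : Fin 2)
    (hwit : ∃ l₂ l₃, c.Witness lmin l₂ l₃)
    (hleast : ∀ l₁ l₂ l₃, c.Witness l₁ l₂ l₃ → lmin ≤ l₁)
    (hcall : c.lab lmin = (Label.push, i))
    (hmatch : c.Matching i lmin lrt)
    (hsm : c.Witness lmin lsm lrt)
    (hsmleast : ∀ l₂, c.Witness lmin l₂ lrt → lsm ≤ l₂) :
    (∀ p lc, lmin < p → p < lsm → c.Matching (1 - i) lc p → lmin < lc) ∧
    (∀ p, lmin < p → p < lsm → p < c.len → c.lab p = (Label.push, 1 - i) →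
      ∃ j, c.Matching (1 - i) p j ∧ j < lsm) :=
  witness_structure_between_lmin_lsm_general CP c lmin lsm lrt i hleast hmatch hsm hsmleast
end
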